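/- Let (Ω,dist,μ) be a space of homogeneous type and let D = ∪_{k∈ℤ} D_k be a dyadic system with scaling parameter δ ∈ (0,1). For every r > 0 there exists an integer k(r) such that: whenever x ∈ Q ∈ D_{k(r)}, then Q ⊂ B(x,r) and μ(B(x,r)) ≤ C μ(Q), with constant C independent of x and r. -/

import Mathlib

open MeasureTheory Metric Filter ENNReal Set
open scoped ENNReal NNReal Topology

noncomputable section

/-- A metric measure space `(Ω, dist, μ)` is a *space of homogeneous type*
if all closed balls have positive finite measure and the doubling condition holds. -/
def IsHomogeneousType {Ω : Type*} [PseudoMetricSpace Ω] [MeasurableSpace Ω]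
    (μ : Measure Ω) : Prop :=
  (∀ (x : Ω) (r : ℝ), 0 < r → 0 < μ (closedBall x r) ∧ μ (closedBall x r) < ∞) ∧
  ∃ C : ℝ≥0∞, C < ∞ ∧ ∀ (x : Ω) (r : ℝ), 0 < r →
    μ (closedBall x (2 * r)) ≤ C * μ (closedBall x r)

/-- A *dyadic system* (in the sense of Hytönen–Kairema) with scaling parameter
`δ ∈ (0,1)` on a metric measure space: for each `k ∈ ℤ` a collection `cubes k` of
pairwise disjoint Borel sets of positive measure covering `Ω`, nested across
generations, each cube of generation `k` containing and being contained in balls of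
radii comparable to `δ^k`. -/
structure DyadicSystem {Ω : Type*} [PseudoMetricSpace Ω] [MeasurableSpace Ω]
    (μ : Measure Ω) (δ : ℝ) where
  cubes : ℤ → Set (Set Ω)
  measurableSet : ∀ k : ℤ, ∀ Q ∈ cubes k, MeasurableSet Q
  measure_pos : ∀ k : ℤ, ∀ Q ∈ cubes k, 0 < μ Q
  pairwiseDisjoint : ∀ k : ℤ, (cubes k).PairwiseDisjoint id
  cover : ∀ k : ℤ, ⋃₀ cubes k = Set.univ
  nested : ∀ k l : ℤ, k ≤ l → ∀ Q ∈ cubes k, ∀ R ∈ cubes l, R ⊆ Q ∨ Q ∩ R = ∅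
  center : ∀ k : ℤ, ∀ Q ∈ cubes k, ∃ z : Ω,
    closedBall z (δ ^ k / 3) ⊆ Q ∧ Q ⊆ closedBall z (2 * δ ^ k)

/-! Pick the generation `k` with `δ ^ k` comparable to `r / 4`. A cube `Q ∋ x` of generation `k`
lies within `2 δ ^ k` of its centre `z`, so `Q ⊆ B(x, 4 δ ^ k) ⊆ B(x, r)`. Conversely `B(x, r)` lies
in the dilate of the inner ball `B(z, δ ^ k / 3) ⊆ Q` by a factor `2 ^ N` depending only on `δ`,
so iterating the doubling condition `N` times gives `μ(B(x, r)) ≤ A ^ N μ(Q)`. -/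

section Doubling

variable {Ω : Type*} [PseudoMetricSpace Ω] [MeasurableSpace Ω] {μ : Measure Ω} {A : ℝ≥0∞}

lemma measure_closedBall_two_pow_mul_le
    (hA : ∀ (x : Ω) (r : ℝ), 0 < r → μ (closedBall x (2 * r)) ≤ A * μ (closedBall x r))
    (n : ℕ) (x : Ω) {s : ℝ} (hs : 0 < s) :
    μ (closedBall x (2 ^ n * s)) ≤ A ^ n * μ (closedBall x s) := by
  induction n with
  | zero => simp
  | succ n ih =>
    calc μ (closedBall x (2 ^ (n + 1) * s)) = μ (closedBall x (2 * (2 ^ n * s))) := by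
          rw [pow_succ', mul_assoc]
      _ ≤ A * μ (closedBall x (2 ^ n * s)) := hA x _ (by positivity)
      _ ≤ A * (A ^ n * μ (closedBall x s)) := by gcongr
      _ = A ^ (n + 1) * μ (closedBall x s) := by rw [pow_succ', mul_assoc]

lemma measure_closedBall_le_of_le_two_pow_mul
    (hA : ∀ (x : Ω) (r : ℝ), 0 < r → μ (closedBall x (2 * r)) ≤ A * μ (closedBall x r))
    {n : ℕ} (x : Ω) {R s : ℝ} (hs : 0 < s) (hR : R ≤ 2 ^ n * s) :
    μ (closedBall x R) ≤ A ^ n * μ (closedBall x s) :=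
  (measure_mono (closedBall_subset_closedBall hR)).trans
    (measure_closedBall_two_pow_mul_le hA n x hs)

end Doubling

lemma exists_zpow_mem_Ico_of_lt_one {δ t : ℝ} (hδ0 : 0 < δ) (hδ1 : δ < 1) (ht : 0 < t) :
    ∃ k : ℤ, δ ^ k ∈ Ico (δ * t) t := by
  obtain ⟨n, hn_le, hn_lt⟩ := exists_mem_Ico_zpow (inv_pos.2 ht) ((one_lt_inv₀ hδ0).2 hδ1)
  rw [inv_zpow, inv_le_inv₀ (zpow_pos hδ0 n) ht] at hn_le
  rw [inv_zpow, inv_lt_inv₀ ht (zpow_pos hδ0 _)] at hn_lt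
  refine ⟨n + 1, ?_, hn_lt⟩
  rw [zpow_add_one₀ hδ0.ne', mul_comm (δ ^ n)]
  exact mul_le_mul_of_nonneg_left hn_le hδ0.le

namespace DyadicSystem

variable {Ω : Type*} [PseudoMetricSpace Ω] [MeasurableSpace Ω] {μ : Measure Ω} {δ : ℝ}
  (D : DyadicSystem μ δ) {k : ℤ} {Q : Set Ω} {x : Ω}

lemma subset_closedBall_of_mem (hQ : Q ∈ D.cubes k) (hx : x ∈ Q) :
    Q ⊆ closedBall x (4 * δ ^ k) := by
  obtain ⟨z, -, hQz⟩ := D.center k Q hQ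
  intro y hy
  have hxz : dist x z ≤ 2 * δ ^ k := hQz hx
  have hyz : dist y z ≤ 2 * δ ^ k := hQz hy
  rw [mem_closedBall]
  linarith [dist_triangle_right y x z]

lemma measure_closedBall_le_of_mem {A : ℝ≥0∞}
    (hA : ∀ (x : Ω) (r : ℝ), 0 < r → μ (closedBall x (2 * r)) ≤ A * μ (closedBall x r))
    (hδ : 0 < δ) (hQ : Q ∈ D.cubes k) (hx : x ∈ Q) {R : ℝ} {n : ℕ}
    (hR : R + 2 * δ ^ k ≤ 2 ^ n * (δ ^ k / 3)) :
    μ (closedBall x R) ≤ A ^ n * μ Q := by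
  obtain ⟨z, hzQ, hQz⟩ := D.center k Q hQ
  calc μ (closedBall x R) ≤ μ (closedBall z (R + 2 * δ ^ k)) :=
        measure_mono (closedBall_subset_closedBall' (by linarith [mem_closedBall.1 (hQz hx)]))
    _ ≤ A ^ n * μ (closedBall z (δ ^ k / 3)) :=
        measure_closedBall_le_of_le_two_pow_mul hA z (by positivity) hR
    _ ≤ A ^ n * μ Q := by gcongr

end DyadicSystem

/-- **Lemma.**  Let `(Ω, dist, μ)` be a space of homogeneous type with a dyadic system of
scaling parameter `δ ∈ (0,1)`.  For every `r > 0` there is a generation `k(r) ∈ ℤ` such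
that whenever `x ∈ Q ∈ 𝒟_{k(r)}`, one has `Q ⊆ B(x,r)` and `μ(B(x,r)) ≤ C μ(Q)`, with a
constant `C` independent of `x` and `r`. -/
theorem dyadic_cube_inside_ball
    {Ω : Type*} [MetricSpace Ω] [MeasurableSpace Ω] {μ : Measure Ω} {δ : ℝ}
    (hμ : IsHomogeneousType μ) (hδ0 : 0 < δ) (hδ1 : δ < 1) (D : DyadicSystem μ δ) :
    ∃ C : ℝ≥0∞, C < ∞ ∧ ∀ r : ℝ, 0 < r → ∃ k : ℤ,
      ∀ Q ∈ D.cubes k, ∀ x ∈ Q, Q ⊆ closedBall x r ∧ μ (closedBall x r) ≤ C * μ Q := by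
  obtain ⟨-, A, hA_lt_top, hA⟩ := hμ
  -- `δ * r / 4 ≤ δ ^ k` gives `r + 2 * δ ^ k ≤ 6 * δ ^ k / δ = 18 / δ * (δ ^ k / 3)`.
  obtain ⟨N, hN⟩ := pow_unbounded_of_one_lt (18 / δ) (one_lt_two (α := ℝ))
  refine ⟨A ^ N, ENNReal.pow_lt_top hA_lt_top, fun r hr => ?_⟩
  obtain ⟨k, hk_lower, hk_upper⟩ :=
    exists_zpow_mem_Ico_of_lt_one hδ0 hδ1 (by positivity : 0 < r / 4)
  have hδk : 0 < δ ^ k := zpow_pos hδ0 k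
  have hR : r + 2 * δ ^ k ≤ 2 ^ N * (δ ^ k / 3) :=
    calc r + 2 * δ ^ k ≤ 18 / δ * (δ ^ k / 3) := by
          rw [div_mul_div_comm, le_div_iff₀ (by positivity)]
          nlinarith
      _ ≤ 2 ^ N * (δ ^ k / 3) := by gcongr
  refine ⟨k, fun Q hQ x hx => ⟨?_, D.measure_closedBall_le_of_mem hA hδ0 hQ hx hR⟩⟩
  exact (D.subset_closedBall_of_mem hQ hx).trans (closedBall_subset_closedBall (by linarith))

end
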